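/- arXiv:2102.05501 — 3 statements merged into one kernel-verified Lean document; each statement's English description precedes it below -/
import Mathlib

section
/- If σ > λ_1/T where λ_1 is the largest eigenvalue of X^T X, then the symmetric matrix σ X^T C_x^{-1} X − X^T X is positive semidefinite. -/
/-!
`P = Xᵀ (X Xᵀ)⁻¹ X` is the orthogonal projection onto the row space of `X`, so `P² = P` and
`P (Xᵀ X) P = Xᵀ X`. Since `Cx⁻¹ = T (X Xᵀ)⁻¹`, this gives
`σ Xᵀ Cx⁻¹ X - Xᵀ X = σT P - Xᵀ X = P (σT - Xᵀ X) P`, a congruence of a matrix that is positive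
semidefinite because every eigenvalue of `Xᵀ X` is at most `λ₁ < σT`.
-/

open Matrix
open scoped ComplexOrder

namespace Matrix

variable {𝕜 : Type*} [RCLike 𝕜] {m n : Type*} [Fintype m] [Fintype n]
  [DecidableEq m] [DecidableEq n]

lemma posSemidef_smul_one_sub_of_eigenvalue_le {A : Matrix n n 𝕜} (hA : A.IsHermitian) {μ : ℝ}
    (h : ∀ (c : ℝ) (v : n → 𝕜), v ≠ 0 → A *ᵥ v = c • v → c ≤ μ) :
    (μ • 1 - A).PosSemidef := by
  have hM : (μ • 1 - A).IsHermitian := (isHermitian_one.smul (IsSelfAdjoint.all μ)).sub hA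
  refine hM.posSemidef_iff_eigenvalues_nonneg.mpr fun i => ?_
  have hw : ⇑(hM.eigenvectorBasis i) ≠ 0 := fun h0 =>
    hM.eigenvectorBasis.orthonormal.ne_zero i (by ext j; exact congrFun h0 j)
  have := h (μ - hM.eigenvalues i) _ hw <| by
    rw [sub_smul, ← hM.mulVec_eigenvectorBasis i, sub_mulVec, smul_mulVec, one_mulVec,
      sub_sub_cancel]
  simp only [Pi.zero_apply]
  linarith

-- Holds also for `k = 0` and singular `A`, where both sides are the junk inverse `0`.
lemma inv_smul₀ {K : Type*} [Field K] (k : K) (A : Matrix n n K) : (k • A)⁻¹ = k⁻¹ • A⁻¹ := by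
  rcases eq_or_ne k 0 with rfl | hk
  · simp
  by_cases hA : IsUnit A.det
  · exact inv_smul' (A := A) (Units.mk0 k hk) hA
  · have hkA : ¬IsUnit (k • A).det := by
      rw [det_smul, IsUnit.mul_iff]
      exact fun h => hA h.2
    rw [nonsing_inv_apply_not_isUnit _ hA, nonsing_inv_apply_not_isUnit _ hkA, smul_zero]

lemma posSemidef_smul_conjTranspose_mul_inv_mul_sub {A : Matrix m n 𝕜}
    (hA : IsUnit (A * Aᴴ).det) {μ : ℝ} (hμ : (μ • 1 - Aᴴ * A).PosSemidef) :
    (μ • (Aᴴ * (A * Aᴴ)⁻¹ * A) - Aᴴ * A).PosSemidef := by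
  set P := Aᴴ * (A * Aᴴ)⁻¹ * A
  have hAP : A * P = A := by
    rw [← Matrix.mul_assoc, ← Matrix.mul_assoc, mul_nonsing_inv _ hA, Matrix.one_mul]
  have hPA : P * Aᴴ = Aᴴ := by
    rw [Matrix.mul_assoc, Matrix.mul_assoc, nonsing_inv_mul _ hA, Matrix.mul_one]
  have hP : Pᴴ = P := by
    simp only [P, conjTranspose_mul, conjTranspose_nonsing_inv, conjTranspose_conjTranspose,
      Matrix.mul_assoc]
  have hPP : P * P = P := by
    rw [show P * P = Aᴴ * (A * Aᴴ)⁻¹ * (A * P) from Matrix.mul_assoc _ _ _, hAP]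
  clear_value P
  have hcompress : P * (μ • 1 - Aᴴ * A) * Pᴴ = μ • P - Aᴴ * A := by
    rw [hP, Matrix.mul_sub, Matrix.sub_mul, Matrix.mul_smul, Matrix.mul_one, Matrix.smul_mul, hPP,
      ← Matrix.mul_assoc, hPA, Matrix.mul_assoc, hAP]
  simpa only [hcompress] using hμ.mul_mul_conjTranspose_same P

end Matrix

theorem stmt_4_general (n T : ℕ) (X : Matrix (Fin n) (Fin T) ℝ)
    (Cx : Matrix (Fin n) (Fin n) ℝ) (hCx : Cx = (T : ℝ)⁻¹ • (X * Xᵀ))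
    (hinv : IsUnit Cx.det)
    (lam1 : ℝ)
    (hlam1_max : ∀ (c : ℝ) (v : Fin T → ℝ), v ≠ 0 → (Xᵀ * X) *ᵥ v = c • v → c ≤ lam1)
    (σ : ℝ) (hσ : lam1 < σ * T) :
    (σ • (Xᵀ * Cx⁻¹ * X) - Xᵀ * X).PosSemidef := by
  have hgram : IsUnit (X * Xᴴ).det := by
    rw [hCx, det_smul] at hinv
    exact conjTranspose_eq_transpose_of_trivial X ▸ isUnit_of_mul_isUnit_right hinv
  have hshift : ((σ * T) • 1 - Xᴴ * X).PosSemidef :=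
    posSemidef_smul_one_sub_of_eigenvalue_le (isHermitian_conjTranspose_mul_self X)
      fun c v hv hcv => ((hlam1_max c v hv hcv).trans hσ.le)
  have hCxinv : Cx⁻¹ = (T : ℝ) • (X * Xᵀ)⁻¹ := by rw [hCx, inv_smul₀, inv_inv]
  rw [hCxinv, Matrix.mul_smul, Matrix.smul_mul, smul_smul]
  simpa only [conjTranspose_eq_transpose_of_trivial] using
    posSemidef_smul_conjTranspose_mul_inv_mul_sub hgram hshift

theorem stmt_4 (n T : ℕ) (X : Matrix (Fin n) (Fin T) ℝ)
    (Cx : Matrix (Fin n) (Fin n) ℝ) (hCx : Cx = (T : ℝ)⁻¹ • (X * Xᵀ))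
    (hinv : IsUnit Cx.det)
    (lam1 : ℝ)
    (hlam1_eig : ∃ v : Fin T → ℝ, v ≠ 0 ∧ (Xᵀ * X) *ᵥ v = lam1 • v)
    (hlam1_max : ∀ (c : ℝ) (v : Fin T → ℝ), v ≠ 0 → (Xᵀ * X) *ᵥ v = c • v → c ≤ lam1)
    (σ : ℝ) (hσ : lam1 < σ * T) :
    (σ • (Xᵀ * Cx⁻¹ * X) - Xᵀ * X).PosSemidef :=
  stmt_4_general n T X Cx hCx hinv lam1 hlam1_max σ hσ
end

section
/- The nonzero eigenvalues of σ X^T C_x^{-1} X − X^T X are exactly σT − λ, where λ ranges over the nonzero eigenvalues of X^T X (with matching eigenvectors), assuming σT > λ_1. In particular, the eigenvector of X^T X for its smallest nonzero eigenvalue is the eigenvector of σ X^T C_x^{-1} X − X^T X for its largest eigenvalue. -/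
open Matrix

theorem stmt_5 (n T : ℕ) (hT : n < T) (X : Matrix (Fin n) (Fin T) ℝ)
    (Cx : Matrix (Fin n) (Fin n) ℝ) (hCx : Cx = (T : ℝ)⁻¹ • (X * Xᵀ))
    (hinv : IsUnit Cx.det)
    (lam1 : ℝ)
    (hlam1_eig : ∃ v : Fin T → ℝ, v ≠ 0 ∧ (Xᵀ * X) *ᵥ v = lam1 • v)
    (hlam1_max : ∀ (c : ℝ) (v : Fin T → ℝ), v ≠ 0 → (Xᵀ * X) *ᵥ v = c • v → c ≤ lam1)
    (σ : ℝ) (hσ : lam1 < σ * T) :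
    (∀ (lam : ℝ) (u : Fin T → ℝ), u ≠ 0 → lam ≠ 0 → (Xᵀ * X) *ᵥ u = lam • u →
      (σ • (Xᵀ * Cx⁻¹ * X) - Xᵀ * X) *ᵥ u = (σ * T - lam) • u) ∧
    (∀ (ν : ℝ) (u : Fin T → ℝ), u ≠ 0 → ν ≠ 0 →
      (σ • (Xᵀ * Cx⁻¹ * X) - Xᵀ * X) *ᵥ u = ν • u →
      (Xᵀ * X) *ᵥ u = (σ * T - ν) • u ∧ σ * T - ν ≠ 0) := by
  have hTpos : (0:ℝ) < T := by exact_mod_cast Nat.zero_lt_of_lt hT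
  have hTne : (T:ℝ) ≠ 0 := ne_of_gt hTpos
  set A := X * Xᵀ with hA
  have hAdet : IsUnit A.det := by
    rw [hCx, Matrix.det_smul] at hinv
    rcases isUnit_iff_ne_zero.mp hinv with h
    exact isUnit_iff_ne_zero.mpr (by
      intro h0
      apply h
      rw [h0, mul_zero])
  have hAinv : A * A⁻¹ = 1 := Matrix.mul_nonsing_inv A hAdet
  have hinvA : A⁻¹ * A = 1 := Matrix.nonsing_inv_mul A hAdet
  -- Cx⁻¹ = T • A⁻¹
  have hCxinv : Cx⁻¹ = (T:ℝ) • A⁻¹ := by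
    apply Matrix.inv_eq_right_inv
    rw [hCx, Matrix.smul_mul, Matrix.mul_smul, smul_smul, inv_mul_cancel₀ hTne, one_smul,
      hAinv]
  set P := Xᵀ * A⁻¹ * X with hP
  have hM : σ • (Xᵀ * Cx⁻¹ * X) - Xᵀ * X = (σ * T) • P - Xᵀ * X := by
    rw [hCxinv]
    congr 1
    rw [hP, Matrix.mul_smul, Matrix.smul_mul, smul_smul]
  have hPXX : P * (Xᵀ * X) = Xᵀ * X := by
    rw [hP]
    calc Xᵀ * A⁻¹ * X * (Xᵀ * X) = Xᵀ * (A⁻¹ * (X * Xᵀ)) * X := by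
          simp only [Matrix.mul_assoc]
      _ = Xᵀ * X := by rw [← hA, hinvA, Matrix.mul_one]
  have hXXP : (Xᵀ * X) * P = Xᵀ * X := by
    rw [hP]
    calc (Xᵀ * X) * (Xᵀ * A⁻¹ * X) = Xᵀ * ((X * Xᵀ) * A⁻¹) * X := by
          simp only [Matrix.mul_assoc]
      _ = Xᵀ * X := by rw [← hA, hAinv, Matrix.mul_one]
  have hPP : P * P = P := by
    calc P * P = Xᵀ * A⁻¹ * ((X * Xᵀ) * A⁻¹) * X := by
          rw [hP]; simp only [Matrix.mul_assoc]
      _ = P := by rw [← hA, hAinv, Matrix.mul_one, hP]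
  constructor
  · intro lam u hu hlam heig
    have hPu : P *ᵥ u = u := by
      have h1 : P *ᵥ ((Xᵀ * X) *ᵥ u) = (Xᵀ * X) *ᵥ u := by
        rw [Matrix.mulVec_mulVec, hPXX]
      rw [heig, Matrix.mulVec_smul] at h1
      have := smul_right_injective (Fin T → ℝ) hlam h1
      exact this
    rw [hM, Matrix.sub_mulVec, Matrix.smul_mulVec, hPu, heig, sub_smul]
  · intro ν u hu hν heig
    rw [hM] at heig
    have hPu : P *ᵥ u = u := by
      have h1 : P *ᵥ (((σ * T) • P - Xᵀ * X) *ᵥ u) = ((σ * T) • P - Xᵀ * X) *ᵥ u := by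
        rw [Matrix.mulVec_mulVec]
        congr 1
        rw [Matrix.mul_sub, Matrix.mul_smul, hPP, hPXX]
      rw [heig, Matrix.mulVec_smul] at h1
      exact smul_right_injective (Fin T → ℝ) hν h1
    have heq : (Xᵀ * X) *ᵥ u = (σ * T - ν) • u := by
      have h2 : (σ * T) • u - (Xᵀ * X) *ᵥ u = ν • u := by
        rw [← heig, Matrix.sub_mulVec, Matrix.smul_mulVec, hPu]
      have : (Xᵀ * X) *ᵥ u = (σ * T) • u - ν • u := by
        rw [← h2]; abel
      rw [this, sub_smul]
    refine ⟨heq, ?_⟩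
    intro h0
    rw [h0, zero_smul] at heq
    -- then X *ᵥ u = 0 since A is invertible, so u = P u = 0
    have hXu : X *ᵥ u = 0 := by
      have h3 : A *ᵥ (X *ᵥ u) = 0 := by
        rw [Matrix.mulVec_mulVec, hA, Matrix.mul_assoc, ← Matrix.mulVec_mulVec, heq,
          Matrix.mulVec_zero]
      calc X *ᵥ u = (A⁻¹ * A) *ᵥ (X *ᵥ u) := by rw [hinvA, Matrix.one_mulVec]
        _ = A⁻¹ *ᵥ (A *ᵥ (X *ᵥ u)) := by rw [← Matrix.mulVec_mulVec]
        _ = 0 := by rw [h3, Matrix.mulVec_zero]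
    apply hu
    rw [← hPu, hP, ← Matrix.mulVec_mulVec, hXu, Matrix.mulVec_zero]
end

section
/- The minimum over Y ∈ R^{m×T} of ‖σ X^T C_x^{-1} X − X^T X − Y^T Y‖_F^2 is attained at Y = W X where the rows of W ∈ R^{m×n} form a suitably scaled basis of the minor subspace of C_x (the span of eigenvectors of C_x corresponding to its m smallest eigenvalues), assuming σ exceeds the largest eigenvalue of X^T X divided by T and C_x has distinct eigenvalues. -/
/-!
Write `X = V diag(√(Tλ)) U` with `U Uᵀ = 1` (a thin SVD). Then
`σ Xᵀ C_x⁻¹ X - XᵀX = Uᵀ diag(d) U` with `d_k = T (σ - λ_k)`, which is nonnegative because `T λ_k`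
is an eigenvalue of `XᵀX`, and increasing in `k`; and `(WX)ᵀ(WX) = Uᵀ diag(d_k · [k ≥ n - m]) U`
keeps the `m` largest `d_k`, leaving the residual `∑_{k < n - m} d_k²`.

No `YᵀY` does better (Eckart–Young for a positive semidefinite target). Rotate the rows of `Y`
so that `Y Yᵀ = diag μ`; the squared overlaps `q_jk` of its rows with the rows of `U` satisfy
Bessel's inequality both ways, so `q_jk / μ_j` is doubly substochastic. Cauchy–Schwarz in each row
then bounds the cross term by `∑_k d_k² e_k` with `0 ≤ e_k ≤ 1` and `∑ e_k ≤ m`, which is at most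
the sum of the `m` largest `d_k²`.
-/

open Matrix Finset

def Fin.natAddSub {n m : ℕ} (hm : m ≤ n) (i : Fin m) : Fin n := ⟨n - m + i, by omega⟩

@[simp]
theorem Fin.val_natAddSub {n m : ℕ} (hm : m ≤ n) (i : Fin m) :
    (Fin.natAddSub hm i : ℕ) = n - m + i := rfl

theorem Fin.sum_filter_sub_le_val {M : Type*} [AddCommMonoid M] {n m : ℕ} (hm : m ≤ n)
    (f : Fin n → M) :
    ∑ k : Fin n with n - m ≤ k.val, f k = ∑ i : Fin m, f (Fin.natAddSub hm i) := by
  symm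
  refine sum_bij' (fun i _ => Fin.natAddSub hm i)
    (fun k hk => ⟨k - (n - m), by simp only [mem_filter] at hk; omega⟩) ?_ ?_ ?_ ?_ ?_ <;> intro k hk <;>
    simp only [mem_filter, mem_univ, true_and, Fin.ext_iff, val_natAddSub] at hk ⊢ <;> omega

theorem Fin.card_filter_sub_le_val {n m : ℕ} (hm : m ≤ n) :
    #{k : Fin n | n - m ≤ k.val} = m := by
  simpa using Fin.sum_filter_sub_le_val hm (fun _ => (1 : ℕ))

theorem Finset.sum_mul_le_sum_of_threshold {ι : Type*} [Fintype ι] [DecidableEq ι]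
    (S : Finset ι) {w e : ι → ℝ} {t : ℝ} (ht : 0 ≤ t) (hS : ∀ k ∈ S, t ≤ w k)
    (hSc : ∀ k ∉ S, w k ≤ t) (he0 : ∀ k, 0 ≤ e k) (he1 : ∀ k, e k ≤ 1)
    (he : ∑ k, e k ≤ #S) :
    ∑ k, w k * e k ≤ ∑ k ∈ S, w k := by
  have hgap : ∑ k ∈ S, w k - ∑ k, w k * e k =
      ∑ k ∈ S, (w k - t) * (1 - e k) + ∑ k ∈ Sᶜ, (t - w k) * e k + t * (#S - ∑ k, e k) := by
    rw [← sum_add_sum_compl S (fun k => w k * e k), ← sum_add_sum_compl S e]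
    simp only [mul_sub, sub_mul, mul_one, sum_sub_distrib, ← mul_sum, sum_const, nsmul_eq_mul]
    ring
  have h1 : 0 ≤ ∑ k ∈ S, (w k - t) * (1 - e k) :=
    sum_nonneg fun k hk => mul_nonneg (sub_nonneg.2 (hS k hk)) (sub_nonneg.2 (he1 k))
  have h2 : 0 ≤ ∑ k ∈ Sᶜ, (t - w k) * e k :=
    sum_nonneg fun k hk => mul_nonneg (sub_nonneg.2 (hSc k (mem_compl.1 hk))) (he0 k)
  linarith [mul_nonneg ht (sub_nonneg.2 he)]

theorem Fin.sum_mul_le_sum_filter_sub_le_val {n m : ℕ} (hm : m ≤ n) {w e : Fin n → ℝ}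
    (hw : Monotone w) (hw0 : ∀ k, 0 ≤ w k) (he0 : ∀ k, 0 ≤ e k) (he1 : ∀ k, e k ≤ 1)
    (he : ∑ k, e k ≤ m) :
    ∑ k, w k * e k ≤ ∑ k : Fin n with n - m ≤ k.val, w k := by
  rcases m.eq_zero_or_pos with rfl | hm0
  · have : ∀ k, e k = 0 := fun k => (sum_eq_zero_iff_of_nonneg fun k _ => he0 k).1
      (le_antisymm (by simpa using he) (sum_nonneg fun k _ => he0 k)) k (mem_univ k)
    simp only [this, mul_zero, sum_const_zero]
    exact sum_nonneg fun k _ => hw0 k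
  · refine sum_mul_le_sum_of_threshold _ (hw0 ⟨n - m, by omega⟩) (fun k hk => hw ?_)
      (fun k hk => hw ?_) he0 he1 (by rwa [Fin.card_filter_sub_le_val hm])
    · simp only [mem_filter] at hk; exact Fin.le_def.2 hk.2
    · simp only [mem_filter, mem_univ, true_and, not_le] at hk; exact Fin.le_def.2 hk.le

theorem two_mul_sum_mul_sub_sq_le {ι : Type*} [Fintype ι] {q : ι → ℝ} {μ : ℝ}
    (hq : ∀ k, 0 ≤ q k) (hμ : ∑ k, q k ≤ μ) (d : ι → ℝ) :
    2 * ∑ k, d k * q k - μ ^ 2 ≤ ∑ k, d k ^ 2 * (q k / μ) := by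
  rcases ((sum_nonneg fun k _ => hq k).trans hμ).eq_or_lt with rfl | hμ0
  · have hq0 : ∀ k, q k = 0 := fun k =>
      (sum_eq_zero_iff_of_nonneg fun k _ => hq k).1 (le_antisymm hμ (sum_nonneg fun k _ => hq k))
        k (mem_univ k)
    simp [hq0]
  · set a := ∑ k, d k * (q k / μ)
    have hqa : ∑ k, d k * q k = μ * a := by
      rw [mul_sum]; exact sum_congr rfl fun k _ => by field_simp
    have hCS : a ^ 2 ≤ (∑ k, q k / μ) * ∑ k, d k ^ 2 * (q k / μ) :=
      sum_sq_le_sum_mul_sum_of_sq_le_mul _ (fun k _ => div_nonneg (hq k) hμ0.le)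
        (fun k _ => mul_nonneg (sq_nonneg _) (div_nonneg (hq k) hμ0.le))
        (fun k _ => le_of_eq (by ring))
    have hrow : ∑ k, q k / μ ≤ 1 := by rw [← sum_div]; exact div_le_one_of_le₀ hμ hμ0.le
    have hnonneg : 0 ≤ ∑ k, d k ^ 2 * (q k / μ) :=
      sum_nonneg fun k _ => mul_nonneg (sq_nonneg _) (div_nonneg (hq k) hμ0.le)
    nlinarith [sq_nonneg (μ - a), mul_le_mul_of_nonneg_right hrow hnonneg]

theorem sum_filter_val_lt_sq_le_of_substochastic {n m : ℕ} (hm : m ≤ n) {d : Fin n → ℝ}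
    (hd : Monotone d) (hd0 : ∀ k, 0 ≤ d k) {μ : Fin m → ℝ} {q : Fin m → Fin n → ℝ}
    (hq : ∀ j k, 0 ≤ q j k)
    (hrow : ∀ j, ∑ k, q j k ≤ μ j) (hcol : ∀ k, ∑ j, q j k / μ j ≤ 1) :
    ∑ k : Fin n with k.val < n - m, d k ^ 2 ≤
      ∑ k, d k ^ 2 - 2 * ∑ j, ∑ k, d k * q j k + ∑ j, μ j ^ 2 := by
  have hμ : ∀ j, 0 ≤ μ j := fun j => (sum_nonneg fun k _ => hq j k).trans (hrow j)
  have hrow' : ∀ j, ∑ k, q j k / μ j ≤ 1 := fun j => by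
    rw [← sum_div]; exact div_le_one_of_le₀ (hrow j) (hμ j)
  have hmass : ∑ k, ∑ j, q j k / μ j ≤ m :=
    calc ∑ k, ∑ j, q j k / μ j = ∑ j, ∑ k, q j k / μ j := sum_comm
      _ ≤ ∑ _j : Fin m, (1 : ℝ) := sum_le_sum fun j _ => hrow' j
      _ = m := by simp
  have htop : ∑ k, d k ^ 2 * ∑ j, q j k / μ j ≤ ∑ k : Fin n with n - m ≤ k.val, d k ^ 2 :=
    Fin.sum_mul_le_sum_filter_sub_le_val hm
      (fun k l hkl => pow_le_pow_left₀ (hd0 k) (hd hkl) 2) (fun k => sq_nonneg _)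
      (fun k => sum_nonneg fun j _ => div_nonneg (hq j k) (hμ j)) hcol hmass
  have hrows : 2 * ∑ j, ∑ k, d k * q j k - ∑ j, μ j ^ 2 ≤
      ∑ k, d k ^ 2 * ∑ j, q j k / μ j :=
    calc 2 * ∑ j, ∑ k, d k * q j k - ∑ j, μ j ^ 2
        = ∑ j, (2 * ∑ k, d k * q j k - μ j ^ 2) := by rw [sum_sub_distrib, mul_sum]
      _ ≤ ∑ j, ∑ k, d k ^ 2 * (q j k / μ j) :=
        sum_le_sum fun j _ => two_mul_sum_mul_sub_sq_le (hq j) (hrow j) d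
      _ = ∑ k, d k ^ 2 * ∑ j, q j k / μ j := by rw [sum_comm]; simp only [mul_sum]
  have hsplit := sum_filter_add_sum_filter_not univ (fun k : Fin n => n - m ≤ k.val)
    (fun k => d k ^ 2)
  simp only [not_le] at hsplit
  linarith

-- Bessel's inequality; with `x / 0 = 0`, zero rows of `Q` contribute nothing.
theorem Matrix.sum_sq_mulVec_div_le {ι κ : Type*} [Fintype ι] [Fintype κ] [DecidableEq ι]
    {Q : Matrix ι κ ℝ} {ν : ι → ℝ} (hQ : Q * Qᵀ = diagonal ν) (v : κ → ℝ) :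
    ∑ i, (Q *ᵥ v) i ^ 2 / ν i ≤ v ⬝ᵥ v := by
  set c : ι → ℝ := fun i => (Q *ᵥ v) i / ν i
  have hterm : ∀ i, c i * (Q *ᵥ v) i = (Q *ᵥ v) i ^ 2 / ν i ∧
      ν i * c i * c i = (Q *ᵥ v) i ^ 2 / ν i := fun i => by
    rcases eq_or_ne (ν i) 0 with h | h <;> simp only [c, h] <;> constructor <;> field_simp
  have hres : (v - Qᵀ *ᵥ c) ⬝ᵥ (v - Qᵀ *ᵥ c) =
      v ⬝ᵥ v - 2 * ∑ i, (Q *ᵥ v) i ^ 2 / ν i + ∑ i, (Q *ᵥ v) i ^ 2 / ν i := by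
    have h1 : v ⬝ᵥ Qᵀ *ᵥ c = ∑ i, (Q *ᵥ v) i ^ 2 / ν i := by
      rw [dotProduct_mulVec, vecMul_transpose, dotProduct_comm]
      exact sum_congr rfl fun i _ => (hterm i).1
    have h2 : (Qᵀ *ᵥ c) ⬝ᵥ (Qᵀ *ᵥ c) = ∑ i, (Q *ᵥ v) i ^ 2 / ν i := by
      rw [dotProduct_mulVec, vecMul_transpose, mulVec_mulVec, hQ]
      exact sum_congr rfl fun i _ => by simpa [mulVec_diagonal] using (hterm i).2
    rw [sub_dotProduct, dotProduct_sub, dotProduct_sub, dotProduct_comm (Qᵀ *ᵥ c) v, h1, h2]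
    ring
  linarith [hres ▸ dotProduct_self_star_nonneg (v - Qᵀ *ᵥ c)]

theorem Matrix.exists_transpose_mul_self_eq_and_mul_transpose_eq_diagonal {ι τ : Type*}
    [Fintype ι] [DecidableEq ι] [Fintype τ] (Y : Matrix ι τ ℝ) :
    ∃ (Z : Matrix ι τ ℝ) (μ : ι → ℝ), Zᵀ * Z = Yᵀ * Y ∧ Z * Zᵀ = diagonal μ := by
  have hH : (Y * Yᵀ).IsHermitian := by simpa using isHermitian_mul_conjTranspose_self Y
  set P : Matrix ι ι ℝ := (hH.eigenvectorUnitary : Matrix ι ι ℝ)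
  have hP : P * Pᵀ = 1 := by
    simpa [P, star_eq_conjTranspose] using (mem_unitaryGroup_iff.1 hH.eigenvectorUnitary.2)
  have hdiag := hH.conjStarAlgAut_star_eigenvectorUnitary
  rw [Unitary.conjStarAlgAut_star_apply] at hdiag
  refine ⟨Pᵀ * Y, hH.eigenvalues, ?_, ?_⟩
  · rw [transpose_mul, transpose_transpose, Matrix.mul_assoc, ← Matrix.mul_assoc P, hP,
      Matrix.one_mul]
  · simpa [P, star_eq_conjTranspose, Matrix.mul_assoc] using hdiag

theorem Matrix.sum_sum_sq_eq_trace_mul_transpose {ι κ : Type*} [Fintype ι] [Fintype κ]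
    (A : Matrix ι κ ℝ) :
    ∑ a, ∑ b, A a b ^ 2 = trace (A * Aᵀ) := by
  simp [trace, mul_apply, sq]

theorem Matrix.sum_sum_sub_sq_eq_trace {ι κ : Type*} [Fintype ι] [Fintype κ]
    (A B : Matrix ι κ ℝ) :
    ∑ a, ∑ b, (A a b - B a b) ^ 2 =
      trace (A * Aᵀ) - 2 * trace (A * Bᵀ) + trace (B * Bᵀ) := by
  have h := sum_sum_sq_eq_trace_mul_transpose (A - B)
  simp only [sub_apply] at h
  rw [h, transpose_sub, Matrix.sub_mul, Matrix.mul_sub, Matrix.mul_sub]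
  simp only [trace_sub]
  rw [← trace_transpose (B * Aᵀ), transpose_mul, transpose_transpose]
  ring

theorem Matrix.trace_transpose_mul_diagonal_mul {ι κ : Type*} [Fintype ι] [Fintype κ]
    [DecidableEq ι] {Q : Matrix ι κ ℝ} {ν : ι → ℝ} (hQ : Q * Qᵀ = diagonal ν) (c : ι → ℝ) :
    trace (Qᵀ * diagonal c * Q) = ∑ k, ν k * c k := by
  rw [trace_mul_comm, ← Matrix.mul_assoc, hQ, diagonal_mul_diagonal, trace_diagonal]

theorem Matrix.sum_sum_sq_transpose_mul_diagonal_mul {ι κ : Type*} [Fintype ι] [Fintype κ]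
    [DecidableEq ι] {U : Matrix ι κ ℝ} (hU : U * Uᵀ = 1) (c : ι → ℝ) :
    ∑ a, ∑ b, (Uᵀ * diagonal c * U) a b ^ 2 = ∑ k, c k ^ 2 := by
  have hsymm : (Uᵀ * diagonal c * U)ᵀ = Uᵀ * diagonal c * U := by
    simp [transpose_mul, Matrix.mul_assoc]
  have hsq : Uᵀ * diagonal c * U * (Uᵀ * diagonal c * U) = Uᵀ * diagonal (c * c) * U := by
    simp only [Matrix.mul_assoc]
    rw [← Matrix.mul_assoc U, hU, Matrix.one_mul, ← Matrix.mul_assoc (diagonal c),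
      diagonal_mul_diagonal]
    rfl
  rw [sum_sum_sq_eq_trace_mul_transpose, hsymm, hsq,
    trace_transpose_mul_diagonal_mul (hU.trans diagonal_one.symm)]
  simp [sq]

theorem Matrix.sum_filter_val_lt_sq_le_sum_sum_sub_sq {n m : ℕ} {τ : Type*} [Fintype τ] (hm : m ≤ n)
    {U : Matrix (Fin n) τ ℝ} (hU : U * Uᵀ = 1) {d : Fin n → ℝ} (hd : Monotone d)
    (hd0 : ∀ k, 0 ≤ d k) (Y : Matrix (Fin m) τ ℝ) :
    ∑ k : Fin n with k.val < n - m, d k ^ 2 ≤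
      ∑ a, ∑ b, ((Uᵀ * diagonal d * U) a b - (Yᵀ * Y) a b) ^ 2 := by
  obtain ⟨Z, μ, hZY, hZ⟩ := exists_transpose_mul_self_eq_and_mul_transpose_eq_diagonal Y
  have hU' : U * Uᵀ = diagonal 1 := hU.trans diagonal_one.symm
  set A := Uᵀ * diagonal d * U
  set G := U * Zᵀ
  have hAA : trace (A * Aᵀ) = ∑ k, d k ^ 2 := by
    rw [← sum_sum_sq_eq_trace_mul_transpose, sum_sum_sq_transpose_mul_diagonal_mul hU]
  have hAB : trace (A * (Zᵀ * Z)ᵀ) = ∑ j, ∑ k, d k * G k j ^ 2 := by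
    have hGt : Z * Uᵀ = Gᵀ := by simp [G, transpose_mul]
    calc trace (A * (Zᵀ * Z)ᵀ) = trace (Uᵀ * (diagonal d * G * Z)) := by
          simp only [A, G, transpose_mul, transpose_transpose, Matrix.mul_assoc]
      _ = trace (diagonal d * G * Gᵀ) := by rw [trace_mul_comm, Matrix.mul_assoc _ Z, hGt]
      _ = ∑ j, ∑ k, d k * G k j ^ 2 := by
        rw [sum_comm, Matrix.mul_assoc]
        simp only [trace, Matrix.diag, diagonal_mul]
        simp only [mul_apply, transpose_apply, mul_sum, sq]
  have hBB : trace ((Zᵀ * Z) * (Zᵀ * Z)ᵀ) = ∑ j, μ j ^ 2 := by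
    have : Zᵀ * Z * (Zᵀ * Z)ᵀ = Zᵀ * diagonal μ * Z := by
      rw [transpose_mul, transpose_transpose, Matrix.mul_assoc, ← Matrix.mul_assoc Z, hZ,
        Matrix.mul_assoc]
    rw [this, trace_transpose_mul_diagonal_mul hZ]
    simp [sq]
  rw [← hZY, sum_sum_sub_sq_eq_trace, hAA, hAB, hBB]
  refine sum_filter_val_lt_sq_le_of_substochastic hm hd hd0 (q := fun j k => G k j ^ 2)
    (fun _ _ => sq_nonneg _) (fun j => ?_) (fun k => ?_)
  · have hμ : Z j ⬝ᵥ Z j = μ j := by simpa [mul_apply, dotProduct] using congr_fun₂ hZ j j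
    have := sum_sq_mulVec_div_le hU' (Z j)
    rw [hμ] at this
    simpa [G, mulVec, dotProduct, mul_apply] using this
  · have h1 : U k ⬝ᵥ U k = 1 := by simpa [mul_apply, dotProduct] using congr_fun₂ hU k k
    have := sum_sq_mulVec_div_le hZ (U k)
    rw [h1] at this
    simpa [G, mulVec, dotProduct, mul_apply, mul_comm] using this

theorem Matrix.exists_eq_mul_diagonal_mul_of_mul_transpose_eq {ι τ : Type*} [Fintype ι]
    [DecidableEq ι] [Fintype τ] {X : Matrix ι τ ℝ} {V : Matrix ι ι ℝ} (hV : Vᵀ * V = 1)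
    {s : ι → ℝ} (hs : ∀ i, s i ≠ 0) (hX : X * Xᵀ = V * diagonal (fun i => s i ^ 2) * Vᵀ) :
    ∃ U : Matrix ι τ ℝ, U * Uᵀ = 1 ∧ X = V * diagonal s * U := by
  have hV' : V * Vᵀ = 1 := mul_eq_one_comm.1 hV
  refine ⟨diagonal s⁻¹ * Vᵀ * X, ?_, ?_⟩
  · have : diagonal s⁻¹ * diagonal (fun i => s i ^ 2) * diagonal s⁻¹ = 1 := by
      rw [diagonal_mul_diagonal, diagonal_mul_diagonal, ← diagonal_one]
      congr 1; funext i; rw [Pi.inv_apply]; field_simp [hs i]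
    calc diagonal s⁻¹ * Vᵀ * X * (diagonal s⁻¹ * Vᵀ * X)ᵀ
        = diagonal s⁻¹ * (Vᵀ * V) * diagonal (fun i => s i ^ 2) * (Vᵀ * V) * diagonal s⁻¹ := by
          simp only [transpose_mul, transpose_transpose, diagonal_transpose, Matrix.mul_assoc]
          rw [← Matrix.mul_assoc X, hX]; simp only [Matrix.mul_assoc]
      _ = 1 := by rw [hV, Matrix.mul_one, Matrix.mul_one, this]
  · have : diagonal s * diagonal s⁻¹ = 1 := by
      rw [diagonal_mul_diagonal, ← diagonal_one]
      congr 1; funext i; rw [Pi.inv_apply]; field_simp [hs i]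
    calc X = V * (diagonal s * diagonal s⁻¹) * Vᵀ * X := by
          rw [this, Matrix.mul_one, hV', Matrix.one_mul]
      _ = V * diagonal s * (diagonal s⁻¹ * Vᵀ * X) := by simp only [Matrix.mul_assoc]

theorem Matrix.transpose_mul_conj_diagonal_mul {ι τ : Type*} [Fintype ι] [DecidableEq ι]
    [Fintype τ] {X U : Matrix ι τ ℝ} {V : Matrix ι ι ℝ} (hV : Vᵀ * V = 1) {s : ι → ℝ}
    (hX : X = V * diagonal s * U) (c : ι → ℝ) :
    Xᵀ * (V * diagonal c * Vᵀ) * X = Uᵀ * diagonal (fun k => s k ^ 2 * c k) * U := by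
  subst hX
  calc (V * diagonal s * U)ᵀ * (V * diagonal c * Vᵀ) * (V * diagonal s * U)
      = Uᵀ * diagonal s * (Vᵀ * V) * diagonal c * (Vᵀ * V) * diagonal s * U := by
        simp only [transpose_mul, diagonal_transpose, Matrix.mul_assoc]
    _ = Uᵀ * diagonal (fun k => s k ^ 2 * c k) * U := by
        rw [hV, Matrix.mul_one, Matrix.mul_one, Matrix.mul_assoc Uᵀ, diagonal_mul_diagonal,
          Matrix.mul_assoc Uᵀ, diagonal_mul_diagonal]
        rw [show (fun k => s k * c k * s k) = fun k => s k ^ 2 * c k from funext fun k => by ring]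

theorem Matrix.lt_of_forall_eigenvalue_transpose_mul_self_lt {ι τ : Type*} [Fintype ι]
    [DecidableEq ι] [Fintype τ] {X : Matrix ι τ ℝ} {V : Matrix ι ι ℝ} (hV : Vᵀ * V = 1)
    {ν : ι → ℝ} (hν : ∀ k, ν k ≠ 0) (hX : X * Xᵀ = V * diagonal ν * Vᵀ) {b : ℝ}
    (hb : ∀ (c : ℝ) (v : τ → ℝ), v ≠ 0 → (Xᵀ * X) *ᵥ v = c • v → c < b) (k : ι) :
    ν k < b := by
  -- `Xᵀ` maps the eigenvector `V eₖ` of `X Xᵀ` to an eigenvector of `Xᵀ X`, same eigenvalue.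
  set v := V *ᵥ Pi.single k 1
  have hv : (X * Xᵀ) *ᵥ v = ν k • v := by
    rw [hX, mulVec_mulVec, Matrix.mul_assoc, Matrix.mul_assoc, hV, Matrix.mul_one,
      ← mulVec_mulVec, diagonal_mulVec_single, ← smul_eq_mul, Pi.single_smul', mulVec_smul]
  have hv0 : v ≠ 0 := fun h => by
    have := congr_arg (Vᵀ *ᵥ ·) h
    simp only [v, mulVec_mulVec, hV, one_mulVec, mulVec_zero] at this
    simpa using congr_fun this k
  refine hb _ (Xᵀ *ᵥ v) (fun h => hv0 ?_) ?_
  · have := hv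
    rw [← mulVec_mulVec, h, mulVec_zero] at this
    exact (smul_eq_zero.1 this.symm).resolve_left (hν k)
  · rw [mulVec_mulVec, Matrix.mul_assoc, ← mulVec_mulVec, hv, mulVec_smul]

theorem Matrix.submatrix_natAddSub_transpose_mul_self {n m : ℕ} {τ : Type*} [Fintype τ]
    (hm : m ≤ n) (f : Fin n → ℝ) (U : Matrix (Fin n) τ ℝ) :
    ((diagonal f * U).submatrix (Fin.natAddSub hm) id)ᵀ *
        (diagonal f * U).submatrix (Fin.natAddSub hm) id =
      Uᵀ * diagonal (fun k => if n - m ≤ k.val then f k ^ 2 else 0) * U := by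
  ext a b
  have hR : ∀ i t, (diagonal f * U).submatrix (Fin.natAddSub hm) id i t =
      f (Fin.natAddSub hm i) * U (Fin.natAddSub hm i) t := fun i t => diagonal_mul f U _ t
  rw [mul_apply, mul_apply]
  simp only [transpose_apply, hR, mul_diagonal]
  rw [← Fin.sum_filter_sub_le_val hm (fun k => f k * U k a * (f k * U k b)), sum_filter]
  exact sum_congr rfl fun k _ => by split_ifs <;> ring

theorem Matrix.sum_sum_sub_sq_truncate {n m : ℕ} {τ : Type*} [Fintype τ]
    {U : Matrix (Fin n) τ ℝ} (hU : U * Uᵀ = 1) (d : Fin n → ℝ) :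
    ∑ a, ∑ b, ((Uᵀ * diagonal d * U) a b -
        (Uᵀ * diagonal (fun k => if n - m ≤ k.val then d k else 0) * U) a b) ^ 2 =
      ∑ k : Fin n with k.val < n - m, d k ^ 2 := by
  simp only [← sub_apply, ← Matrix.mul_sub, ← Matrix.sub_mul]
  rw [diagonal_sub, sum_sum_sq_transpose_mul_diagonal_mul hU, sum_filter]
  exact sum_congr rfl fun k _ => by split_ifs <;> first | omega | simp

theorem Matrix.conj_diagonal_inv {ι : Type*} [Fintype ι] [DecidableEq ι] {V : Matrix ι ι ℝ}
    (hV : Vᵀ * V = 1) {lam : ι → ℝ} (hlam : ∀ k, lam k ≠ 0) :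
    (V * diagonal lam * Vᵀ)⁻¹ = V * diagonal lam⁻¹ * Vᵀ := by
  refine inv_eq_right_inv ?_
  calc V * diagonal lam * Vᵀ * (V * diagonal lam⁻¹ * Vᵀ)
      = V * (diagonal lam * (Vᵀ * V) * diagonal lam⁻¹) * Vᵀ := by simp only [Matrix.mul_assoc]
    _ = 1 := by
      rw [hV, Matrix.mul_one, diagonal_mul_diagonal,
        show (fun k => lam k * lam⁻¹ k) = fun _ => 1 from funext fun k => mul_inv_cancel₀ (hlam k),
        diagonal_one, Matrix.mul_one, mul_eq_one_comm.1 hV]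

theorem Matrix.smul_transpose_mul_inv_mul_sub {ι τ : Type*} [Fintype ι] [DecidableEq ι]
    [Fintype τ] {X U : Matrix ι τ ℝ} {V : Matrix ι ι ℝ} (hV : Vᵀ * V = 1) {s lam : ι → ℝ}
    {c : ℝ} (hX : X = V * diagonal s * U) (hlam : ∀ k, lam k ≠ 0)
    (hs : ∀ k, s k ^ 2 = c * lam k) (σ : ℝ) :
    σ • (Xᵀ * (V * diagonal lam * Vᵀ)⁻¹ * X) - Xᵀ * X =
      Uᵀ * diagonal (fun k => c * (σ - lam k)) * U := by
  have hXtX : Xᵀ * X = Xᵀ * (V * diagonal (fun _ => 1) * Vᵀ) * X := by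
    rw [diagonal_one, Matrix.mul_one, mul_eq_one_comm.1 hV, Matrix.mul_one]
  rw [conj_diagonal_inv hV hlam, hXtX, transpose_mul_conj_diagonal_mul hV hX,
    transpose_mul_conj_diagonal_mul hV hX, ← Matrix.smul_mul, ← Matrix.mul_smul,
    ← Matrix.sub_mul, ← Matrix.mul_sub, ← diagonal_smul, diagonal_sub]
  refine congrArg (fun D => Uᵀ * diagonal D * U) (funext fun k => ?_)
  simp only [hs, Pi.smul_apply, Pi.inv_apply, smul_eq_mul]
  field_simp [hlam k]

theorem Matrix.submatrix_diagonal_mul_transpose_mul {ι τ l : Type*} [Fintype ι] [DecidableEq ι]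
    [Fintype τ] {X U : Matrix ι τ ℝ} {V : Matrix ι ι ℝ} (hV : Vᵀ * V = 1) {s : ι → ℝ}
    (hX : X = V * diagonal s * U) (w : ι → ℝ) (e : l → ι) :
    (diagonal w * Vᵀ).submatrix e id * X = (diagonal (w * s) * U).submatrix e id := by
  rw [← submatrix_id_id X, ← submatrix_mul _ _ _ _ _ Function.bijective_id, hX]
  congr 1
  rw [← Matrix.mul_assoc, ← Matrix.mul_assoc, Matrix.mul_assoc (diagonal w), hV, Matrix.mul_one,
    diagonal_mul_diagonal]
  rfl

theorem Matrix.transpose_mul_self_of_row_eq_smul_col {n m : ℕ} {τ : Type*} [Fintype τ]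
    (hm : m ≤ n) {X U : Matrix (Fin n) τ ℝ} {V : Matrix (Fin n) (Fin n) ℝ} (hV : Vᵀ * V = 1)
    {s : Fin n → ℝ} (hX : X = V * diagonal s * U) {W : Matrix (Fin m) (Fin n) ℝ}
    (w : Fin n → ℝ) (hW : ∀ i j, W i j = w (Fin.natAddSub hm i) * V j (Fin.natAddSub hm i)) :
    (W * X)ᵀ * (W * X) =
      Uᵀ * diagonal (fun k => if n - m ≤ k.val then (w k * s k) ^ 2 else 0) * U := by
  have hW' : W = (diagonal w * Vᵀ).submatrix (Fin.natAddSub hm) id := by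
    ext i j
    rw [submatrix_apply, id, diagonal_mul, transpose_apply]
    exact hW i j
  rw [hW', submatrix_diagonal_mul_transpose_mul hV hX, submatrix_natAddSub_transpose_mul_self]
  rfl

theorem stmt_8 (n T m : ℕ) (hT : n < T) (hm : m ≤ n)
    (X : Matrix (Fin n) (Fin T) ℝ)
    (Cx : Matrix (Fin n) (Fin n) ℝ) (hCx : Cx = (T : ℝ)⁻¹ • (X * Xᵀ))
    -- eigen-decomposition of Cx with simple (distinct) spectrum
    (V : Matrix (Fin n) (Fin n) ℝ) (hV : Vᵀ * V = 1)
    (lam : Fin n → ℝ) (hlam_distinct : StrictAnti lam) (hlam_pos : ∀ i, 0 < lam i)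
    (hdecomp : Cx = V * Matrix.diagonal lam * Vᵀ)
    -- σT exceeds the top eigenvalue of XᵀX
    (σ : ℝ)
    (hσ : ∀ (c : ℝ) (v : Fin T → ℝ), v ≠ 0 → (Xᵀ * X) *ᵥ v = c • v → c < σ * T)
    -- W has rows forming a suitably scaled basis of the minor subspace of Cx
    (W : Matrix (Fin m) (Fin n) ℝ)
    (hW : ∀ (i : Fin m) (j : Fin n),
      W i j = Real.sqrt ((σ - lam ⟨n - m + i, by omega⟩) / lam ⟨n - m + i, by omega⟩) * V j ⟨n - m + i, by omega⟩) :
    ∀ Y : Matrix (Fin m) (Fin T) ℝ,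
      (∑ a : Fin T, ∑ b : Fin T,
        ((σ • (Xᵀ * Cx⁻¹ * X) - Xᵀ * X) a b - ((W * X)ᵀ * (W * X)) a b) ^ 2) ≤
      (∑ a : Fin T, ∑ b : Fin T,
        ((σ • (Xᵀ * Cx⁻¹ * X) - Xᵀ * X) a b - (Yᵀ * Y) a b) ^ 2) := by
  intro Y
  have hT0 : (0 : ℝ) < T := by exact_mod_cast (by omega : 0 < T)
  have hTlam : ∀ k, 0 < (T : ℝ) * lam k := fun k => mul_pos hT0 (hlam_pos k)
  have hXX : X * Xᵀ = V * diagonal ((T : ℝ) • lam) * Vᵀ := by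
    rw [diagonal_smul, Matrix.mul_smul, Matrix.smul_mul, ← hdecomp, hCx, smul_smul,
      mul_inv_cancel₀ hT0.ne', one_smul]
  have hlamσ : ∀ k, lam k < σ := fun k => by
    have := lt_of_forall_eigenvalue_transpose_mul_self_lt hV (fun k => (hTlam k).ne') hXX hσ k
    nlinarith
  have hs : ∀ k, √(T * lam k) ^ 2 = T * lam k := fun k => Real.sq_sqrt (hTlam k).le
  obtain ⟨U, hU, hXU⟩ := exists_eq_mul_diagonal_mul_of_mul_transpose_eq hV
    (s := fun k => √(T * lam k)) (fun k => (Real.sqrt_pos.2 (hTlam k)).ne')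
    (by simp only [hs]; exact hXX)
  have hB : (W * X)ᵀ * (W * X) =
      Uᵀ * diagonal (fun k => if n - m ≤ k.val then T * (σ - lam k) else 0) * U := by
    rw [transpose_mul_self_of_row_eq_smul_col hm hV hXU (fun k => √((σ - lam k) / lam k)) hW]
    refine congrArg (fun D => Uᵀ * diagonal D * U) (funext fun k => ?_)
    rw [mul_pow, hs, Real.sq_sqrt (div_nonneg (sub_nonneg.2 (hlamσ k).le) (hlam_pos k).le)]
    split_ifs
    · field_simp [(hlam_pos k).ne']
    · rfl
  rw [hdecomp, smul_transpose_mul_inv_mul_sub hV hXU (fun k => (hlam_pos k).ne') hs, hB,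
    sum_sum_sub_sq_truncate hU]
  exact sum_filter_val_lt_sq_le_sum_sum_sub_sq hm hU
    (fun k l hkl => mul_le_mul_of_nonneg_left (by linarith [hlam_distinct.antitone hkl]) hT0.le)
    (fun k => mul_nonneg hT0.le (sub_nonneg.2 (hlamσ k).le)) Y
end
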